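/- For any graph G, there exists a minimum L-trail decomposition of G that is obtained by subdividing the trails of some minimum (unbounded) trail decomposition of G. -/

import Mathlib

set_option linter.unusedSectionVars false


/-- A trail in a simple graph: a walk with no repeated edges, together with its endpoints. -/
structure GraphTrail {V : Type*} (G : SimpleGraph V) where
  first : V
  last : V
  walk : G.Walk first last
  isTrail : walk.IsTrail

namespace GraphTrail

variable {V : Type*} {G : SimpleGraph V}

/-- The list of edges traversed by the trail. -/
def edges (T : GraphTrail G) : List (Sym2 V) := T.walk.edges

/-- The list of vertices visited by the trail (with multiplicity). -/
def support (T : GraphTrail G) : List V := T.walk.support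

end GraphTrail

/-- A collection of trails is edge-disjoint if no two distinct trails share an edge. -/
def TrailsEdgeDisjoint {V : Type*} {G : SimpleGraph V} (C : Finset (GraphTrail G)) : Prop :=
  (C : Set (GraphTrail G)).Pairwise fun T₁ T₂ => ∀ e, e ∈ T₁.edges → e ∉ T₂.edges

/-- A trail cover of `G`: a set of pairwise edge-disjoint trails visiting every vertex. -/
def IsTrailCover {V : Type*} (G : SimpleGraph V) (C : Finset (GraphTrail G)) : Prop :=
  TrailsEdgeDisjoint C ∧ ∀ v : V, ∃ T ∈ C, v ∈ T.support

/-- A trail decomposition of `G`: a set of pairwise edge-disjoint trails covering every edge. -/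
def IsTrailDecomposition {V : Type*} (G : SimpleGraph V) (C : Finset (GraphTrail G)) : Prop :=
  TrailsEdgeDisjoint C ∧ ∀ e ∈ G.edgeSet, ∃ T ∈ C, e ∈ T.edges

/-- A minimum trail decomposition: one with the fewest trails. -/
def IsMinTrailDecomposition {V : Type*} (G : SimpleGraph V) (D : Finset (GraphTrail G)) : Prop :=
  IsTrailDecomposition G D ∧
    ∀ D' : Finset (GraphTrail G), IsTrailDecomposition G D' → D.card ≤ D'.card

namespace MinTrailDec

open SimpleGraph List Finset

variable {V : Type*} {G : SimpleGraph V}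

/-- The ceiling of `T.edges.length / L`. -/
def cost (L : ℕ) (T : GraphTrail G) : ℕ := (T.edges.length + L - 1) / L

/-- The total ceiling-cost of a finite set of trails. -/
def fcost (L : ℕ) (D : Finset (GraphTrail G)) : ℕ := ∑ T ∈ D, cost L T

theorem cost_subadd {L : ℕ} (hL : 0 < L) (a b : ℕ) :
    (a + b + L - 1) / L ≤ (a + L - 1) / L + (b + L - 1) / L := by
  have key : ∀ x : ℕ, x ≤ L * ((x + L - 1) / L) := by
    intro x
    have := le_smul_ceilDiv (a := L) (b := x) hL
    simpa [Nat.ceilDiv_eq_add_pred_div, smul_eq_mul] using this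
  have h3 : (a + b) ⌈/⌉ L ≤ (a + L - 1) / L + (b + L - 1) / L :=
    (ceilDiv_le_iff_le_mul hL).mpr (by rw [mul_add]; exact Nat.add_le_add (key a) (key b))
  simpa [Nat.ceilDiv_eq_add_pred_div, Nat.add_sub_cancel] using h3

/-- An open trail has a nonempty edge list. -/
theorem open_edges_ne_nil (T : GraphTrail G) (h : T.first ≠ T.last) : T.edges ≠ [] := by
  intro he
  have hlen : T.walk.length = 0 := by
    have := congrArg List.length he
    simpa [GraphTrail.edges] using this
  exact h (SimpleGraph.Walk.eq_of_length_eq_zero hlen)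

theorem mem_support_of_mem_edges {a b : V} (w : G.Walk a b) {e : Sym2 V} {v : V}
    (he : e ∈ w.edges) (hv : v ∈ e) : v ∈ w.support := by
  induction e with
  | _ x y =>
    rcases Sym2.mem_iff.mp hv with rfl | rfl
    · exact w.fst_mem_support_of_mem_edges he
    · exact w.snd_mem_support_of_mem_edges he

theorem exists_edge_of_mem_support {v : V} : ∀ {a b : V} (w : G.Walk a b),
    v ∈ w.support → w.edges ≠ [] → ∃ e ∈ w.edges, v ∈ e := by
  intro a b w
  induction w with
  | nil => intro _ hw; simp at hw
  | @cons a c d h p ih =>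
    intro hv _
    rw [SimpleGraph.Walk.support_cons, List.mem_cons] at hv
    rcases hv with rfl | hv
    · exact ⟨s(v, c), by simp, by simp⟩
    · by_cases hpe : p.edges = []
      · have hvc : v = c := by
          have hlen : p.length = 0 := by
            have := congrArg List.length hpe
            simpa using this
          cases p with
          | nil => simpa using hv
          | cons h' q => simp at hlen
        exact ⟨s(a, c), by simp, by simp [hvc]⟩
      · obtain ⟨e, he, hve⟩ := ih hv hpe
        exact ⟨e, by simp [he], hve⟩

/-- Merge two trails of a decomposition into one whose edges are a permutation of the union. -/
theorem merge {L : ℕ} (hL : 0 < L) {D : Finset (GraphTrail G)} (hD : IsTrailDecomposition G D)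
    {T1 T2 N : GraphTrail G} (h1 : T1 ∈ D) (h2 : T2 ∈ D) (h12 : T1 ≠ T2)
    (hperm : N.edges ~ T1.edges ++ T2.edges) (hne : T1.edges ≠ []) :
    ∃ D' : Finset (GraphTrail G), IsTrailDecomposition G D' ∧ D'.card + 1 = D.card ∧
      fcost L D' ≤ fcost L D := by
  classical
  obtain ⟨e₁, he₁⟩ := List.exists_mem_of_ne_nil _ hne
  have heN : e₁ ∈ N.edges := hperm.mem_iff.mpr (List.mem_append_left _ he₁)
  set R := (D.erase T1).erase T2 with hR
  have hRD : R ⊆ D := (Finset.erase_subset _ _).trans (Finset.erase_subset _ _)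
  have hmemR : ∀ S ∈ R, S ∈ D ∧ S ≠ T1 ∧ S ≠ T2 := by
    intro S hS
    rw [hR, Finset.mem_erase, Finset.mem_erase] at hS
    exact ⟨hS.2.2, hS.2.1, hS.1⟩
  have hNR : N ∉ R := by
    intro hN
    obtain ⟨hND, hNT1, _⟩ := hmemR N hN
    exact hD.1 (Finset.mem_coe.mpr h1) (Finset.mem_coe.mpr hND) (Ne.symm hNT1) e₁ he₁ heN
  refine ⟨insert N R, ⟨?_, ?_⟩, ?_, ?_⟩
  · -- pairwise edge-disjoint
    intro A hA B hB hAB e heA heB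
    rw [Finset.coe_insert, Set.mem_insert_iff] at hA hB
    have hmemN : ∀ e, e ∈ N.edges → e ∈ T1.edges ∨ e ∈ T2.edges := by
      intro e he
      have := hperm.mem_iff.mp he
      simpa using this
    rcases hA with rfl | hA
    · rcases hB with rfl | hB
      · exact hAB rfl
      · obtain ⟨hBD, hBT1, hBT2⟩ := hmemR B hB
        rcases hmemN e heA with h | h
        · exact hD.1 (Finset.mem_coe.mpr h1) (Finset.mem_coe.mpr hBD) (Ne.symm hBT1) e h heB
        · exact hD.1 (Finset.mem_coe.mpr h2) (Finset.mem_coe.mpr hBD) (Ne.symm hBT2) e h heB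
    · rcases hB with rfl | hB
      · obtain ⟨hAD, hAT1, hAT2⟩ := hmemR A hA
        rcases hmemN e heB with h | h
        · exact hD.1 (Finset.mem_coe.mpr h1) (Finset.mem_coe.mpr hAD) (Ne.symm hAT1) e h heA
        · exact hD.1 (Finset.mem_coe.mpr h2) (Finset.mem_coe.mpr hAD) (Ne.symm hAT2) e h heA
      · exact hD.1 (Finset.mem_coe.mpr (hRD hA)) (Finset.mem_coe.mpr (hRD hB)) hAB e heA heB
  · -- coverage
    intro e he
    obtain ⟨T, hT, heT⟩ := hD.2 e he
    by_cases hT1 : T = T1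
    · exact ⟨N, Finset.mem_insert_self _ _,
        hperm.mem_iff.mpr (List.mem_append_left _ (hT1 ▸ heT))⟩
    by_cases hT2 : T = T2
    · exact ⟨N, Finset.mem_insert_self _ _,
        hperm.mem_iff.mpr (List.mem_append_right _ (hT2 ▸ heT))⟩
    · exact ⟨T, Finset.mem_insert_of_mem (by rw [hR]; simp [Finset.mem_erase, hT1, hT2, hT]),
        heT⟩
  · -- cardinality
    have hT2' : T2 ∈ D.erase T1 := Finset.mem_erase.mpr ⟨Ne.symm h12, h2⟩
    have h1pos : 0 < (D.erase T1).card := Finset.card_pos.mpr ⟨T2, hT2'⟩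
    have e1 : (D.erase T1).card + 1 = D.card := Finset.card_erase_add_one h1
    have e2 : R.card + 1 = (D.erase T1).card := Finset.card_erase_add_one hT2'
    rw [Finset.card_insert_of_notMem hNR]
    omega
  · -- cost
    have hlen : N.edges.length = T1.edges.length + T2.edges.length := by
      rw [hperm.length_eq, List.length_append]
    have hcN : cost L N ≤ cost L T1 + cost L T2 := by
      unfold cost; rw [hlen]; exact cost_subadd hL _ _
    have hs1 : fcost L D = cost L T1 + ∑ S ∈ D.erase T1, cost L S :=
      (Finset.add_sum_erase _ _ h1).symm
    have hT2' : T2 ∈ D.erase T1 := Finset.mem_erase.mpr ⟨Ne.symm h12, h2⟩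
    have hs2 : ∑ S ∈ D.erase T1, cost L S = cost L T2 + ∑ S ∈ R, cost L S :=
      (Finset.add_sum_erase _ _ hT2').symm
    have hs3 : fcost L (insert N R) = cost L N + ∑ S ∈ R, cost L S :=
      Finset.sum_insert hNR
    unfold fcost at *
    omega

/-- Dropping an edgeless trail from a decomposition. -/
theorem drop_empty (L : ℕ) {D : Finset (GraphTrail G)} (hD : IsTrailDecomposition G D)
    {T : GraphTrail G} (hT : T ∈ D) (he : T.edges = []) :
    ∃ D' : Finset (GraphTrail G), IsTrailDecomposition G D' ∧ D'.card + 1 = D.card ∧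
      fcost L D' ≤ fcost L D := by
  classical
  refine ⟨D.erase T, ⟨hD.1.mono (by simp [Finset.coe_subset, Finset.erase_subset]), ?_⟩,
    Finset.card_erase_add_one hT, Finset.sum_le_sum_of_subset (Finset.erase_subset _ _)⟩
  intro e heG
  obtain ⟨S, hS, heS⟩ := hD.2 e heG
  have hST : S ≠ T := by rintro rfl; rw [he] at heS; simp at heS
  exact ⟨S, Finset.mem_erase.mpr ⟨hST, hS⟩, heS⟩


theorem tedges (T : GraphTrail G) : T.edges = T.walk.edges := rfl
theorem tsupp (T : GraphTrail G) : T.support = T.walk.support := rfl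

/-- Absorb a closed trail `K` into a trail `T` through a common support vertex. -/
theorem op2 {L : ℕ} (hL : 0 < L) {D : Finset (GraphTrail G)} (hD : IsTrailDecomposition G D)
    {K T : GraphTrail G} (hK : K ∈ D) (hT : T ∈ D) (hKT : T ≠ K) (hcl : K.first = K.last)
    {v : V} (hvK : v ∈ K.support) (hvT : v ∈ T.support) (hTne : T.edges ≠ []) :
    ∃ D' : Finset (GraphTrail G), IsTrailDecomposition G D' ∧ D'.card + 1 = D.card ∧
      fcost L D' ≤ fcost L D := by
  classical
  have hdisj : ∀ e ∈ T.edges, e ∉ K.edges :=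
    hD.1 (Finset.mem_coe.mpr hT) (Finset.mem_coe.mpr hK) hKT
  set Kc : G.Walk K.first K.first := K.walk.copy rfl hcl.symm with hKc
  have hv' : v ∈ Kc.support := by
    rw [hKc, SimpleGraph.Walk.support_copy]; rw [tsupp] at hvK; exact hvK
  set Kr := Kc.rotate v hv' with hKr
  have hKre : Kr.edges ~ K.edges := by
    have hrot : Kr.edges ~r Kc.edges := Kc.rotate_edges v hv'
    have h2 : Kc.edges = K.edges := by rw [hKc, SimpleGraph.Walk.edges_copy, tedges]
    rw [← h2]; exact hrot.perm
  rw [tsupp] at hvT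
  set w1 := T.walk.takeUntil v hvT with hw1
  set w2 := T.walk.dropUntil v hvT with hw2
  have hsplit : w1.edges ++ w2.edges = T.edges := by
    have hh := congrArg SimpleGraph.Walk.edges (T.walk.take_spec hvT)
    rw [SimpleGraph.Walk.edges_append] at hh
    rw [tedges]; exact hh
  set W : G.Walk T.first T.last := w1.append (Kr.append w2) with hW
  have hWperm : W.edges ~ T.edges ++ K.edges := by
    rw [hW, SimpleGraph.Walk.edges_append, SimpleGraph.Walk.edges_append, ← hsplit]
    calc w1.edges ++ (Kr.edges ++ w2.edges)
        ~ w1.edges ++ (K.edges ++ w2.edges) := (hKre.append_right w2.edges).append_left w1.edges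
      _ ~ w1.edges ++ (w2.edges ++ K.edges) := List.perm_append_comm.append_left w1.edges
      _ = (w1.edges ++ w2.edges) ++ K.edges := (List.append_assoc _ _ _).symm
  have hWnodup : W.edges.Nodup := by
    rw [hWperm.nodup_iff, List.nodup_append]
    exact ⟨T.isTrail.edges_nodup, K.isTrail.edges_nodup, fun a ha b hb hab => hdisj a ha (hab ▸ hb)⟩
  exact merge hL hD hT hK hKT
    (N := ⟨T.first, T.last, W, (SimpleGraph.Walk.isTrail_def _).mpr hWnodup⟩) hWperm hTne

/-- Concatenate two open trails sharing an end vertex. -/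
theorem op3 {L : ℕ} (hL : 0 < L) {D : Finset (GraphTrail G)} (hD : IsTrailDecomposition G D)
    {T1 T2 : GraphTrail G} (h1 : T1 ∈ D) (h2 : T2 ∈ D) (h12 : T1 ≠ T2)
    (ho1 : T1.first ≠ T1.last) {v : V}
    (hv1 : v = T1.first ∨ v = T1.last) (hv2 : v = T2.first ∨ v = T2.last) :
    ∃ D' : Finset (GraphTrail G), IsTrailDecomposition G D' ∧ D'.card + 1 = D.card ∧
      fcost L D' ≤ fcost L D := by
  classical
  have hdisj : ∀ e ∈ T1.edges, e ∉ T2.edges :=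
    hD.1 (Finset.mem_coe.mpr h1) (Finset.mem_coe.mpr h2) h12
  have mkN : ∀ {a b : V} (w : G.Walk a b), w.edges ~ T1.edges ++ T2.edges →
      ∃ D' : Finset (GraphTrail G), IsTrailDecomposition G D' ∧ D'.card + 1 = D.card ∧
        fcost L D' ≤ fcost L D := by
    intro a b w hperm
    have hnodup : w.edges.Nodup := by
      rw [hperm.nodup_iff, List.nodup_append]
      exact ⟨T1.isTrail.edges_nodup, T2.isTrail.edges_nodup, fun a ha b hb hab => hdisj a ha (hab ▸ hb)⟩
    exact merge hL hD h1 h2 h12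
      (N := ⟨a, b, w, (SimpleGraph.Walk.isTrail_def _).mpr hnodup⟩) hperm
      (open_edges_ne_nil T1 ho1)
  rcases hv1 with rfl | rfl
  · rcases hv2 with hv2 | hv2
    · -- T1.first = T2.first
      refine mkN (T1.walk.reverse.append (T2.walk.copy hv2.symm rfl)) ?_
      rw [SimpleGraph.Walk.edges_append, SimpleGraph.Walk.edges_reverse,
        SimpleGraph.Walk.edges_copy, ← tedges, ← tedges]
      exact (List.reverse_perm T1.edges).append_right T2.edges
    · -- T1.first = T2.last
      refine mkN (T2.walk.append (T1.walk.copy hv2 rfl)) ?_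
      rw [SimpleGraph.Walk.edges_append, SimpleGraph.Walk.edges_copy, ← tedges, ← tedges]
      exact List.perm_append_comm
  · rcases hv2 with hv2 | hv2
    · -- T1.last = T2.first
      refine mkN (T1.walk.append (T2.walk.copy hv2.symm rfl)) ?_
      rw [SimpleGraph.Walk.edges_append, SimpleGraph.Walk.edges_copy, ← tedges, ← tedges]
    · -- T1.last = T2.last
      refine mkN (T1.walk.append ((T2.walk.reverse).copy hv2.symm rfl)) ?_
      rw [SimpleGraph.Walk.edges_append, SimpleGraph.Walk.edges_copy,
        SimpleGraph.Walk.edges_reverse, ← tedges, ← tedges]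
      exact (List.reverse_perm T2.edges).append_left T1.edges

/-- A decomposition on which no joining rule applies. -/
def IsStuck (D : Finset (GraphTrail G)) : Prop :=
  (∀ T ∈ D, T.edges ≠ []) ∧
  (∀ K ∈ D, K.first = K.last → ∀ T ∈ D, T ≠ K → ∀ v, v ∈ K.support → v ∉ T.support) ∧
  (∀ T1 ∈ D, ∀ T2 ∈ D, T1 ≠ T2 → T1.first ≠ T1.last → T2.first ≠ T2.last →
    ∀ v : V, (v = T1.first ∨ v = T1.last) → ¬(v = T2.first ∨ v = T2.last))

theorem reduce {L : ℕ} (hL : 0 < L) {D : Finset (GraphTrail G)}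
    (hD : IsTrailDecomposition G D) (h : ¬IsStuck D) :
    ∃ D' : Finset (GraphTrail G), IsTrailDecomposition G D' ∧ D'.card + 1 = D.card ∧
      fcost L D' ≤ fcost L D := by
  by_cases hc1 : ∀ T ∈ D, T.edges ≠ []
  · by_cases hc2 : ∀ K ∈ D, K.first = K.last → ∀ T ∈ D, T ≠ K → ∀ v, v ∈ K.support →
        v ∉ T.support
    · by_cases hc3 : ∀ T1 ∈ D, ∀ T2 ∈ D, T1 ≠ T2 → T1.first ≠ T1.last → T2.first ≠ T2.last →
        ∀ v : V, (v = T1.first ∨ v = T1.last) → ¬(v = T2.first ∨ v = T2.last)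
      · exact absurd ⟨hc1, hc2, hc3⟩ h
      · push_neg at hc3
        obtain ⟨T1, hT1, T2, hT2, h12, ho1, ho2, v, hv1, hv2⟩ := hc3
        exact op3 hL hD hT1 hT2 h12 ho1 hv1 hv2
    · push_neg at hc2
      obtain ⟨K, hK, hcl, T, hT, hTK, v, hvK, hvT⟩ := hc2
      exact op2 hL hD hK hT hTK hcl hvK hvT (hc1 T hT)
  · push_neg at hc1
    obtain ⟨T, hT, he⟩ := hc1
    exact drop_empty L hD hT he

theorem to_stuck {L : ℕ} (hL : 0 < L) : ∀ (n : ℕ) (D : Finset (GraphTrail G)), D.card ≤ n →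
    IsTrailDecomposition G D → ∃ Ds : Finset (GraphTrail G),
      IsTrailDecomposition G Ds ∧ IsStuck Ds ∧ fcost L Ds ≤ fcost L D := by
  intro n
  induction n with
  | zero =>
    intro D hc hD
    by_cases hs : IsStuck D
    · exact ⟨D, hD, hs, le_rfl⟩
    · obtain ⟨D', _, hc', _⟩ := reduce hL hD hs
      omega
  | succ n ih =>
    intro D hc hD
    by_cases hs : IsStuck D
    · exact ⟨D, hD, hs, le_rfl⟩
    · obtain ⟨D', hD', hc', hf⟩ := reduce hL hD hs
      obtain ⟨Ds, hd1, hd2, hd3⟩ := ih D' (by omega) hD'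
      exact ⟨Ds, hd1, hd2, hd3.trans hf⟩


theorem sum_mod_two {α : Type*} {s : Finset α} {f : α → ℕ} (h : ∀ x ∈ s, f x % 2 = 0) :
    (∑ x ∈ s, f x) % 2 = 0 := by
  rw [Finset.sum_nat_mod, Finset.sum_congr rfl h]
  simp

theorem exists_odd_of_sum_odd {α : Type*} {s : Finset α} {f : α → ℕ}
    (h : (∑ x ∈ s, f x) % 2 = 1) : ∃ x ∈ s, f x % 2 = 1 := by
  by_contra hc
  push_neg at hc
  have h0 : ∀ x ∈ s, f x % 2 = 0 := fun x hx => by have := hc x hx; omega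
  rw [sum_mod_two h0] at h
  omega

section Parity

variable [DecidableEq V]

/-- Number of edges of a trail incident to `v` (with multiplicity, but trails have no
repeated edges). -/
def eCount (v : V) (T : GraphTrail G) : ℕ :=
  Multiset.countP (fun e => v ∈ e) (T.edges : Multiset (Sym2 V))

/-- Number of trail-ends at `v`. -/
def endCount (v : V) (T : GraphTrail G) : ℕ :=
  (if T.first = v then 1 else 0) + (if T.last = v then 1 else 0)

/-- Total number of trail-ends at `v` over a decomposition. -/
def ends (v : V) (D : Finset (GraphTrail G)) : ℕ := ∑ T ∈ D, endCount v T

theorem walk_parity (v : V) : ∀ {a b : V} (w : G.Walk a b),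
    (Multiset.countP (fun e => v ∈ e) (w.edges : Multiset (Sym2 V)) +
      (if a = v then 1 else 0) + (if b = v then 1 else 0)) % 2 = 0 := by
  intro a b w
  induction w with
  | nil =>
    simp only [SimpleGraph.Walk.edges_nil, Multiset.coe_nil, Multiset.countP_zero]
    split_ifs <;> rfl
  | @cons a c b h p ih =>
    have hac : a ≠ c := h.ne
    have hcount : Multiset.countP (fun e => v ∈ e)
        (((SimpleGraph.Walk.cons h p).edges : List (Sym2 V)) : Multiset (Sym2 V)) =
        Multiset.countP (fun e => v ∈ e) (p.edges : Multiset (Sym2 V)) +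
          (if v = a ∨ v = c then 1 else 0) := by
      rw [SimpleGraph.Walk.edges_cons, ← Multiset.cons_coe, Multiset.countP_cons]
      simp [Sym2.mem_iff]
    rw [hcount]
    by_cases ha : a = v <;> by_cases hc : c = v
    · exact absurd (ha.trans hc.symm) hac
    · rw [if_pos (Or.inl ha.symm), if_pos ha]
      rw [if_neg hc] at ih
      omega
    · rw [if_pos (Or.inr hc.symm), if_neg ha]
      rw [if_pos hc] at ih
      omega
    · rw [if_neg (fun hor => hor.elim (fun hh => ha hh.symm) (fun hh => hc hh.symm)), if_neg ha]
      rw [if_neg hc] at ih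
      omega

theorem trail_parity (v : V) (T : GraphTrail G) : (eCount v T + endCount v T) % 2 = 0 := by
  have := walk_parity v T.walk
  unfold eCount endCount
  rw [tedges]
  omega

/-- The multiset of all edges of a family of trails. -/
def edgesM (D : Finset (GraphTrail G)) : Multiset (Sym2 V) :=
  ∑ T ∈ D, (T.edges : Multiset (Sym2 V))

theorem edgesM_nodup_mem {D : Finset (GraphTrail G)} (hD : TrailsEdgeDisjoint D) :
    (edgesM D).Nodup ∧ ∀ e, (e ∈ edgesM D ↔ ∃ T ∈ D, e ∈ T.edges) := by
  classical
  induction D using Finset.cons_induction with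
  | empty => simp [edgesM]
  | cons T s hTs ih =>
    have hsub : TrailsEdgeDisjoint s := hD.mono (by simp [Finset.coe_subset, Finset.subset_cons])
    obtain ⟨ihn, ihm⟩ := ih hsub
    have hsum : edgesM (Finset.cons T s hTs) = (T.edges : Multiset (Sym2 V)) + edgesM s :=
      Finset.sum_cons hTs
    constructor
    · rw [hsum, Multiset.nodup_add]
      refine ⟨by exact_mod_cast T.isTrail.edges_nodup, ihn, ?_⟩
      rw [Multiset.disjoint_left]
      intro e heT heS
      rw [Multiset.mem_coe] at heT
      obtain ⟨S, hS, heS'⟩ := (ihm e).mp heS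
      have hTS : T ≠ S := by rintro rfl; exact hTs hS
      exact hD (by simp) (by simp [hS]) hTS e heT heS'
    · intro e
      rw [hsum, Multiset.mem_add, Multiset.mem_coe, ihm]
      constructor
      · rintro (h | ⟨S, hS, hS'⟩)
        exacts [⟨T, by simp, h⟩, ⟨S, by simp [hS], hS'⟩]
      · rintro ⟨S, hS, hS'⟩
        rcases Finset.mem_cons.mp hS with rfl | hS
        exacts [Or.inl hS', Or.inr ⟨S, hS, hS'⟩]

theorem edgesM_eq {D D' : Finset (GraphTrail G)} (hD : IsTrailDecomposition G D)
    (hD' : IsTrailDecomposition G D') : edgesM D = edgesM D' := by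
  obtain ⟨h1n, h1m⟩ := edgesM_nodup_mem hD.1
  obtain ⟨h2n, h2m⟩ := edgesM_nodup_mem hD'.1
  rw [Multiset.Nodup.ext h1n h2n]
  intro e
  rw [h1m, h2m]
  constructor
  · rintro ⟨T, hT, he⟩
    exact hD'.2 e (T.walk.edges_subset_edgeSet he)
  · rintro ⟨T, hT, he⟩
    exact hD.2 e (T.walk.edges_subset_edgeSet he)

theorem eSum_eq_countP (v : V) (D : Finset (GraphTrail G)) :
    ∑ T ∈ D, eCount v T = Multiset.countP (fun e => v ∈ e) (edgesM D) := by
  classical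
  induction D using Finset.cons_induction with
  | empty => simp [edgesM]
  | cons T s hTs ih =>
    rw [Finset.sum_cons,
      show edgesM (Finset.cons T s hTs) = (T.edges : Multiset (Sym2 V)) + edgesM s from
        Finset.sum_cons hTs,
      Multiset.countP_add, ih]
    rfl

theorem ends_mod_congr {D D' : Finset (GraphTrail G)} (hD : IsTrailDecomposition G D)
    (hD' : IsTrailDecomposition G D') (v : V) : ends v D % 2 = ends v D' % 2 := by
  have key : ∀ {C : Finset (GraphTrail G)}, IsTrailDecomposition G C →
      (∑ T ∈ C, eCount v T + ends v C) % 2 = 0 := by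
    intro C _
    have h1 : (∑ T ∈ C, (eCount v T + endCount v T)) % 2 = 0 :=
      sum_mod_two (fun T _ => trail_parity v T)
    rw [Finset.sum_add_distrib] at h1
    exact h1
  have h1 := key hD
  have h2 := key hD'
  have h3 : ∑ T ∈ D, eCount v T = ∑ T ∈ D', eCount v T := by
    rw [eSum_eq_countP, eSum_eq_countP, edgesM_eq hD hD']
  omega

theorem endCount_odd {v : V} {S : GraphTrail G} (h : endCount v S % 2 = 1) :
    S.first ≠ S.last ∧ (S.first = v ∨ S.last = v) := by
  unfold endCount at h
  by_cases h1 : S.first = v <;> by_cases h2 : S.last = v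
  · rw [if_pos h1, if_pos h2] at h; omega
  · exact ⟨fun hq => h2 (hq ▸ h1), Or.inl h1⟩
  · exact ⟨fun hq => h1 (hq.trans h2), Or.inr h2⟩
  · rw [if_neg h1, if_neg h2] at h; omega

theorem endCount_closed_even {v : V} {S : GraphTrail G} (h : S.first = S.last) :
    endCount v S % 2 = 0 := by
  unfold endCount
  rw [h]
  split_ifs <;> rfl

end Parity

/-- Crawling along a walk: if a vertex set is closed under taking `G`-edges and an edge set
contains all edges at those vertices, a walk starting in the set stays there. -/
theorem crawl1 {KS : Set V} {KE : Set (Sym2 V)}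
    (hcl : ∀ x y, G.Adj x y → x ∈ KS → s(x, y) ∈ KE)
    (hend : ∀ e ∈ KE, ∀ x ∈ e, x ∈ KS) :
    ∀ {a b : V} (w : G.Walk a b), a ∈ KS → (∀ e ∈ w.edges, e ∈ KE) ∧ b ∈ KS := by
  intro a b w
  induction w with
  | nil => intro hx; exact ⟨by simp, hx⟩
  | @cons a c b h p ih =>
    intro ha
    have he : s(a, c) ∈ KE := hcl a c h ha
    have hc : c ∈ KS := hend _ he c (by simp)
    obtain ⟨hp, hb⟩ := ih hc
    refine ⟨?_, hb⟩
    intro e hee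
    rw [SimpleGraph.Walk.edges_cons, List.mem_cons] at hee
    rcases hee with rfl | hee
    exacts [he, hp e hee]

theorem crawl2 {KS : Set V} {KE : Set (Sym2 V)}
    (hcl : ∀ x y, G.Adj x y → x ∈ KS → s(x, y) ∈ KE)
    (hend : ∀ e ∈ KE, ∀ x ∈ e, x ∈ KS) :
    ∀ {a b : V} (w : G.Walk a b) {e₀ : Sym2 V}, e₀ ∈ w.edges → e₀ ∈ KE →
      ∀ e ∈ w.edges, e ∈ KE := by
  intro a b w
  induction w with
  | nil => intro e₀ h; simp at h
  | @cons a c b h p ih =>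
    intro e₀ h0 hK0
    rw [SimpleGraph.Walk.edges_cons, List.mem_cons] at h0
    by_cases hfirst : s(a, c) ∈ KE
    · have hc : c ∈ KS := hend _ hfirst c (by simp)
      have hall := (crawl1 hcl hend p hc).1
      intro e he
      rw [SimpleGraph.Walk.edges_cons, List.mem_cons] at he
      rcases he with rfl | he
      exacts [hfirst, hall e he]
    · rcases h0 with rfl | h0
      · exact absurd hK0 hfirst
      · have hall := ih h0 hK0
        have hc : c ∈ KS := by
          obtain ⟨e, he, hce⟩ := exists_edge_of_mem_support p p.start_mem_support
            (fun hnil => by rw [hnil] at h0; simp at h0)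
          exact hend _ (hall e he) c hce
        have : s(a, c) ∈ KE := by
          have h' := hcl c a h.symm hc
          rwa [Sym2.eq_swap] at h'
        exact absurd this hfirst


/-- A stuck decomposition is a minimum trail decomposition. -/
theorem stuck_min [Fintype V] [DecidableEq V] {D D' : Finset (GraphTrail G)}
    (hD : IsTrailDecomposition G D) (hS : IsStuck D) (hD' : IsTrailDecomposition G D') :
    D.card ≤ D'.card := by
  classical
  obtain ⟨hS1, hS2, hS3⟩ := hS
  set cD := D.filter (fun T => T.first = T.last) with hcDdef
  set oD := D.filter (fun T => ¬T.first = T.last) with hoDdef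
  have hsplit : cD.card + oD.card = D.card :=
    Finset.card_filter_add_card_filter_not _
  have hclose : ∀ K ∈ cD, ∀ x y, G.Adj x y → x ∈ K.walk.support → s(x, y) ∈ K.edges := by
    intro K hK x y hxy hxK
    obtain ⟨hKD, hKcl⟩ := Finset.mem_filter.mp hK
    obtain ⟨T, hT, heT⟩ := hD.2 s(x, y) (G.mem_edgeSet.mpr hxy)
    have hxT : x ∈ T.walk.support := mem_support_of_mem_edges T.walk heT (by simp)
    rcases eq_or_ne T K with rfl | hne
    · exact heT
    · exact absurd hxT (hS2 K hKD hKcl T hT hne x hxK)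
  have hend : ∀ K : GraphTrail G, ∀ e ∈ K.edges, ∀ x ∈ e, x ∈ K.walk.support :=
    fun K e he x hx => mem_support_of_mem_edges K.walk he hx
  have hpick : ∀ K : GraphTrail G, ∃ T' e, K ∈ cD → T' ∈ D' ∧ e ∈ T'.edges ∧ e ∈ K.edges := by
    intro K
    by_cases hK : K ∈ cD
    · have hKD : K ∈ D := (Finset.mem_filter.mp hK).1
      obtain ⟨e, he⟩ := List.exists_mem_of_ne_nil _ (hS1 K hKD)
      obtain ⟨T', hT', heT'⟩ := hD'.2 e (K.walk.edges_subset_edgeSet he)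
      exact ⟨T', e, fun _ => ⟨hT', heT', he⟩⟩
    · exact ⟨K, s(K.first, K.first), fun h => absurd h hK⟩
  choose φ ew hspec using hpick
  have hφ1 : ∀ K ∈ cD, φ K ∈ D' := fun K hK => (hspec K hK).1
  have hew1 : ∀ K ∈ cD, ew K ∈ (φ K).edges := fun K hK => (hspec K hK).2.1
  have hew2 : ∀ K ∈ cD, ew K ∈ K.edges := fun K hK => (hspec K hK).2.2
  have hφsub : ∀ K ∈ cD, ∀ e ∈ (φ K).edges, e ∈ K.edges := by
    intro K hK
    exact crawl2 (KS := {v | v ∈ K.walk.support}) (KE := {e | e ∈ K.edges})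
      (fun x y hxy hx => hclose K hK x y hxy hx) (fun e he x hx => hend K e he x hx)
      ((φ K).walk) (hew1 K hK) (hew2 K hK)
  set X := cD.image φ with hXdef
  have hXD' : X ⊆ D' := by
    intro S hS
    obtain ⟨K, hK, rfl⟩ := Finset.mem_image.mp hS
    exact hφ1 K hK
  have hXcard : X.card = cD.card := by
    apply Finset.card_image_of_injOn
    intro K1 h1c K2 h2c heq
    have h1 : K1 ∈ cD := Finset.mem_coe.mp h1c
    have h2 : K2 ∈ cD := Finset.mem_coe.mp h2c
    by_contra hne
    have he1 : ew K1 ∈ K1.edges := hew2 K1 h1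
    have he1' : ew K1 ∈ (φ K1).edges := hew1 K1 h1
    have he2 : ew K1 ∈ K2.edges := hφsub K2 h2 _ (heq ▸ he1')
    exact hD.1 (Finset.mem_coe.mpr (Finset.mem_filter.mp h1).1)
      (Finset.mem_coe.mpr (Finset.mem_filter.mp h2).1) hne _ he1 he2
  have hXconf : ∀ S ∈ X, ∃ K ∈ cD, (∀ e ∈ S.edges, e ∈ K.edges) ∧ S.edges ≠ [] := by
    intro S hS
    obtain ⟨K, hK, rfl⟩ := Finset.mem_image.mp hS
    exact ⟨K, hK, hφsub K hK, List.ne_nil_of_mem (hew1 K hK)⟩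
  set A := Finset.univ.filter (fun v => ends v D % 2 = 1) with hAdef
  have hA : A = oD.biUnion (fun T => {T.first, T.last}) := by
    ext v
    simp only [hAdef, Finset.mem_filter, Finset.mem_univ, true_and, Finset.mem_biUnion]
    constructor
    · intro hodd
      obtain ⟨S, hSD, hSodd⟩ := exists_odd_of_sum_odd hodd
      obtain ⟨hopen, hor⟩ := endCount_odd hSodd
      refine ⟨S, Finset.mem_filter.mpr ⟨hSD, hopen⟩, ?_⟩
      rcases hor with h | h
      · exact Finset.mem_insert.mpr (Or.inl h.symm)
      · exact Finset.mem_insert.mpr (Or.inr (Finset.mem_singleton.mpr h.symm))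
    · rintro ⟨T, hToD, hvT⟩
      obtain ⟨hTD, hTopen⟩ := Finset.mem_filter.mp hToD
      have hvT' : T.first = v ∨ T.last = v := by
        rcases Finset.mem_insert.mp hvT with h | h
        exacts [Or.inl h.symm, Or.inr (Finset.mem_singleton.mp h).symm]
      have h1 : endCount v T = 1 := by
        unfold endCount
        rcases hvT' with h | h
        · rw [if_pos h, if_neg (fun hl => hTopen (h.trans hl.symm))]
        · rw [if_neg (fun hf => hTopen (hf.trans h.symm)), if_pos h]
      have hrest : (∑ S ∈ D.erase T, endCount v S) % 2 = 0 := by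
        apply sum_mod_two
        intro S hSe
        obtain ⟨hST, hSD⟩ := Finset.mem_erase.mp hSe
        by_cases hScl : S.first = S.last
        · exact endCount_closed_even hScl
        · have hno := hS3 T hTD S hSD (fun h => hST h.symm) hTopen hScl v
            (by rcases hvT' with h | h; exacts [Or.inl h.symm, Or.inr h.symm])
          unfold endCount
          rw [if_neg (fun h => hno (Or.inl h.symm)), if_neg (fun h => hno (Or.inr h.symm))]
      have hsum : ends v D = endCount v T + ∑ S ∈ D.erase T, endCount v S := by
        unfold ends
        exact (Finset.add_sum_erase _ _ hTD).symm
      omega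
  have hAcard : A.card = 2 * oD.card := by
    rw [hA, Finset.card_biUnion]
    · rw [Finset.sum_congr rfl (fun T hT => Finset.card_pair ((Finset.mem_filter.mp hT).2)),
        Finset.sum_const, smul_eq_mul, mul_comm]
    · intro T1 h1 T2 h2 hne
      rw [Function.onFun, Finset.disjoint_left]
      intro v hv1 hv2
      obtain ⟨hT1D, ho1⟩ := Finset.mem_filter.mp h1
      obtain ⟨hT2D, ho2⟩ := Finset.mem_filter.mp h2
      have hv1' : v = T1.first ∨ v = T1.last := by
        rcases Finset.mem_insert.mp hv1 with h | h
        exacts [Or.inl h, Or.inr (Finset.mem_singleton.mp h)]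
      have hv2' : v = T2.first ∨ v = T2.last := by
        rcases Finset.mem_insert.mp hv2 with h | h
        exacts [Or.inl h, Or.inr (Finset.mem_singleton.mp h)]
      exact hS3 T1 hT1D T2 hT2D hne ho1 ho2 v hv1' hv2'
  have hg : ∀ v ∈ A, ∃ S, S ∈ D' \ X ∧ (S.first = v ∨ S.last = v) := by
    intro v hv
    have hvodd : ends v D % 2 = 1 := (Finset.mem_filter.mp hv).2
    have hvodd' : ends v D' % 2 = 1 := by rw [← ends_mod_congr hD hD' v]; exact hvodd
    obtain ⟨S, hSD', hSodd⟩ := exists_odd_of_sum_odd hvodd'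
    obtain ⟨hSopen, hSor⟩ := endCount_odd hSodd
    refine ⟨S, Finset.mem_sdiff.mpr ⟨hSD', ?_⟩, hSor⟩
    intro hSX
    obtain ⟨K, hKcD, hKsub, hKne⟩ := hXconf S hSX
    have hvS : v ∈ S.walk.support := by
      rcases hSor with h | h
      · rw [← h]; exact S.walk.start_mem_support
      · rw [← h]; exact S.walk.end_mem_support
    obtain ⟨e, heS, hve⟩ := exists_edge_of_mem_support S.walk hvS hKne
    have hvK : v ∈ K.walk.support := mem_support_of_mem_edges K.walk (hKsub e heS) hve
    obtain ⟨T, hToD, hvT⟩ := Finset.mem_biUnion.mp (by rw [← hA]; exact hv)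
    obtain ⟨hTD, hTopen⟩ := Finset.mem_filter.mp hToD
    obtain ⟨hKD, hKcl⟩ := Finset.mem_filter.mp hKcD
    have hTK : T ≠ K := fun h => hTopen (h ▸ hKcl)
    have hvT' : v ∈ T.walk.support := by
      rcases Finset.mem_insert.mp hvT with h | h
      · rw [h]; exact T.walk.start_mem_support
      · rw [Finset.mem_singleton.mp h]; exact T.walk.end_mem_support
    exact hS2 K hKD hKcl T hTD hTK v hvK hvT'
  choose g hg1 hg2 using hg
  have hAle : A.card ≤ 2 * (D' \ X).card := by
    rw [← Finset.card_attach (s := A)]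
    apply Finset.card_le_mul_card_image_of_maps_to (f := fun v => g v.1 v.2) (t := D' \ X)
      (fun v _ => hg1 v.1 v.2)
    intro S _
    have hsub : ∀ x ∈ A.attach.filter (fun v => g v.1 v.2 = S), (x : {a // a ∈ A}).1 ∈
        ({S.first, S.last} : Finset V) := by
      intro x hx
      obtain ⟨hxA, hxS⟩ := Finset.mem_filter.mp hx
      have := hg2 x.1 x.2
      rw [hxS] at this
      rcases this with h | h
      · exact Finset.mem_insert.mpr (Or.inl h.symm)
      · exact Finset.mem_insert.mpr (Or.inr (Finset.mem_singleton.mpr h.symm))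
    calc (A.attach.filter (fun v => g v.1 v.2 = S)).card
        ≤ ({S.first, S.last} : Finset V).card := by
          apply Finset.card_le_card_of_injOn (fun x => x.1) (fun x hx => hsub x hx)
          intro x _ y _ hxy
          exact Subtype.ext hxy
      _ ≤ 2 := le_trans (Finset.card_insert_le _ _) (by simp)
  have hsdiff : (D' \ X).card + X.card = D'.card := Finset.card_sdiff_add_card_eq_card hXD'
  omega


/-- Split a walk after `n` edges. -/
def wtake : ∀ {a b : V} (n : ℕ) (w : G.Walk a b), Σ c : V, G.Walk a c × G.Walk c b
  | a, _, 0, w => ⟨a, SimpleGraph.Walk.nil, w⟩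
  | _, _, _ + 1, SimpleGraph.Walk.nil => ⟨_, SimpleGraph.Walk.nil, SimpleGraph.Walk.nil⟩
  | _, _, n + 1, SimpleGraph.Walk.cons h p =>
    let x := wtake n p
    ⟨x.1, SimpleGraph.Walk.cons h x.2.1, x.2.2⟩

theorem wtake_spec : ∀ {a b : V} (n : ℕ) (w : G.Walk a b),
    ((wtake n w).2.1.append (wtake n w).2.2) = w
  | _, _, 0, w => rfl
  | _, _, _ + 1, SimpleGraph.Walk.nil => rfl
  | _, _, n + 1, SimpleGraph.Walk.cons h p => by
    simp only [wtake, SimpleGraph.Walk.cons_append]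
    rw [wtake_spec n p]

theorem wtake_len : ∀ {a b : V} (n : ℕ) (w : G.Walk a b),
    (wtake n w).2.1.length = min n w.length
  | _, _, 0, w => by simp [wtake]
  | _, _, _ + 1, SimpleGraph.Walk.nil => by simp [wtake]
  | _, _, n + 1, SimpleGraph.Walk.cons h p => by
    simp only [wtake, SimpleGraph.Walk.length_cons, wtake_len n p]
    omega

/-- The two halves of a split trail. -/
theorem wtake_trail2 (L : ℕ) {a b : V} (w : G.Walk a b) (ht : w.IsTrail) :
    (wtake L w).2.2.IsTrail := by
  have hed : w.edges = (wtake L w).2.1.edges ++ (wtake L w).2.2.edges := by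
    conv_lhs => rw [← wtake_spec L w]
    rw [SimpleGraph.Walk.edges_append]
  have hnd : ((wtake L w).2.1.edges ++ (wtake L w).2.2.edges).Nodup := by
    rw [← hed]; exact ht.edges_nodup
  exact (SimpleGraph.Walk.isTrail_def _).mpr hnd.of_append_right

/-- Cut a trail into consecutive pieces of length at most `L`. -/
def cut (L : ℕ) {a b : V} (w : G.Walk a b) (ht : w.IsTrail) : List (GraphTrail G) :=
  if h : w.length ≤ L ∨ L = 0 then [⟨a, b, w, ht⟩]
  else
    have hed : w.edges = (wtake L w).2.1.edges ++ (wtake L w).2.2.edges := by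
      conv_lhs => rw [← wtake_spec L w]
      rw [SimpleGraph.Walk.edges_append]
    have hnd : ((wtake L w).2.1.edges ++ (wtake L w).2.2.edges).Nodup := by
      rw [← hed]; exact ht.edges_nodup
    have ht1 : (wtake L w).2.1.IsTrail :=
      (SimpleGraph.Walk.isTrail_def _).mpr hnd.of_append_left
    have ht2 : (wtake L w).2.2.IsTrail :=
      (SimpleGraph.Walk.isTrail_def _).mpr hnd.of_append_right
    ⟨a, (wtake L w).1, (wtake L w).2.1, ht1⟩ :: cut L (wtake L w).2.2 ht2
termination_by w.length
decreasing_by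
  have h1 := congrArg SimpleGraph.Walk.length (wtake_spec L w)
  rw [SimpleGraph.Walk.length_append] at h1
  have h2 := wtake_len L w
  push_neg at h
  omega

theorem cut_flatten (L : ℕ) : ∀ (n : ℕ) {a b : V} (w : G.Walk a b) (ht : w.IsTrail),
    w.length ≤ n → ((cut L w ht).map GraphTrail.edges).flatten = w.edges := by
  intro n
  induction n with
  | zero =>
    intro a b w ht hn
    rw [cut, dif_pos (Or.inl (by omega))]
    simp [tedges]
  | succ n ih =>
    intro a b w ht hn
    rw [cut]
    split_ifs with h
    · simp [tedges]
    · push_neg at h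
      have h1 := congrArg SimpleGraph.Walk.length (wtake_spec L w)
      rw [SimpleGraph.Walk.length_append] at h1
      have h2 := wtake_len L w
      rw [List.map_cons, List.flatten_cons, ih _ _ (by omega)]
      have hed : w.edges = (wtake L w).2.1.edges ++ (wtake L w).2.2.edges := by
        conv_lhs => rw [← wtake_spec L w]
        rw [SimpleGraph.Walk.edges_append]
      rw [tedges]
      exact hed.symm

theorem cut_piece_le (L : ℕ) (hL : 0 < L) : ∀ (n : ℕ) {a b : V} (w : G.Walk a b)
    (ht : w.IsTrail), w.length ≤ n → ∀ P ∈ cut L w ht,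
      P.edges.length ≤ L ∧ (0 < w.length → P.edges ≠ []) := by
  intro n
  induction n with
  | zero =>
    intro a b w ht hn P hP
    rw [cut, dif_pos (Or.inl (by omega))] at hP
    simp only [List.mem_singleton] at hP
    subst hP
    refine ⟨?_, fun hpos => by omega⟩
    show w.edges.length ≤ L
    rw [SimpleGraph.Walk.length_edges]
    omega
  | succ n ih =>
    intro a b w ht hn P hP
    rw [cut] at hP
    split_ifs at hP with h
    · simp only [List.mem_singleton] at hP
      subst hP
      rcases h with h | h
      · constructor
        · show w.edges.length ≤ L
          rw [SimpleGraph.Walk.length_edges]; exact h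
        · intro hpos
          show w.edges ≠ []
          intro hnil
          have hcl := congrArg List.length hnil
          rw [SimpleGraph.Walk.length_edges] at hcl
          simp only [List.length_nil] at hcl
          omega
      · omega
    · push_neg at h
      have h1 := congrArg SimpleGraph.Walk.length (wtake_spec L w)
      rw [SimpleGraph.Walk.length_append] at h1
      have h2 := wtake_len L w
      rcases List.mem_cons.mp hP with rfl | hP
      · constructor
        · show (wtake L w).2.1.edges.length ≤ L
          rw [SimpleGraph.Walk.length_edges]; omega
        · intro _
          show (wtake L w).2.1.edges ≠ []
          intro hnil
          have hcl := congrArg List.length hnil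
          rw [SimpleGraph.Walk.length_edges] at hcl
          simp only [List.length_nil] at hcl
          omega
      · have hih := ih ((wtake L w).2.2) (wtake_trail2 L w ht) (by omega) P hP
        exact ⟨hih.1, fun _ => hih.2 (by omega)⟩

theorem cut_count (L : ℕ) (hL : 0 < L) : ∀ (n : ℕ) {a b : V} (w : G.Walk a b)
    (ht : w.IsTrail), w.length ≤ n → 0 < w.length →
      (cut L w ht).length ≤ (w.length + L - 1) / L := by
  intro n
  induction n with
  | zero => intro a b w ht hn hpos; omega
  | succ n ih =>
    intro a b w ht hn hpos
    rw [cut]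
    split_ifs with h
    · simp only [List.length_singleton]
      rw [Nat.le_div_iff_mul_le hL]
      omega
    · push_neg at h
      have h1 := congrArg SimpleGraph.Walk.length (wtake_spec L w)
      rw [SimpleGraph.Walk.length_append] at h1
      have h2 := wtake_len L w
      rw [List.length_cons]
      have hrec := ih ((wtake L w).2.2) (wtake_trail2 L w ht) (by omega) (by omega)
      have heq : (w.length + L - 1) / L = (w.length - 1) / L + 1 := by
        rw [show w.length + L - 1 = (w.length - 1) + L by omega, Nat.add_div_right _ hL]
      have heq2 : ((wtake L w).2.2.length + L - 1) / L = (w.length - 1) / L := by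
        congr 1
        omega
      omega

theorem flatten_disjoint {α β : Type*} (f : β → List α) :
    ∀ (ps : List β), ((ps.map f).flatten).Nodup →
      ∀ P1 ∈ ps, ∀ P2 ∈ ps, P1 ≠ P2 → ∀ e ∈ f P1, e ∉ f P2 := by
  intro ps
  induction ps with
  | nil => simp
  | cons P rest ih =>
    intro hnd P1 h1 P2 h2 hne e he1 he2
    rw [List.map_cons, List.flatten_cons] at hnd
    have hdis := (List.nodup_append.mp hnd).2.2
    have hndr := (List.nodup_append.mp hnd).2.1
    rcases List.mem_cons.mp h1 with rfl | hh1 <;> rcases List.mem_cons.mp h2 with rfl | hh2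
    · exact hne rfl
    · exact hdis e he1 e (List.mem_flatten.mpr ⟨f P2, List.mem_map_of_mem hh2, he2⟩) rfl
    · exact hdis e he2 e (List.mem_flatten.mpr ⟨f P1, List.mem_map_of_mem hh1, he1⟩) rfl
    · exact ih hndr P1 hh1 P2 hh2 hne e he1 he2

/-- The decomposition of a finite graph into single-edge trails. -/
theorem exists_bounded_dec [Fintype V] (L : ℕ) (hL : 0 < L) :
    ∃ C : Finset (GraphTrail G), IsTrailDecomposition G C ∧ ∀ T ∈ C, T.edges.length ≤ L := by
  classical
  have mk : ∀ e : Sym2 V, ∃ T : GraphTrail G, e ∈ G.edgeSet → T.edges = [e] := by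
    intro e
    by_cases he : e ∈ G.edgeSet
    · obtain ⟨⟨x, y⟩, rfl⟩ := e.exists_rep
      have hadj : G.Adj x y := he
      exact ⟨⟨x, y, SimpleGraph.Walk.cons hadj SimpleGraph.Walk.nil,
        by simp [SimpleGraph.Walk.isTrail_def]⟩, fun _ => by simp [tedges]⟩
    · obtain ⟨⟨x, y⟩, rfl⟩ := e.exists_rep
      exact ⟨⟨x, x, SimpleGraph.Walk.nil, by simp [SimpleGraph.Walk.isTrail_def]⟩,
        fun h => absurd h he⟩
  choose Tf hTf using mk
  refine ⟨G.edgeFinset.image Tf, ⟨?_, ?_⟩, ?_⟩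
  · intro T1 h1 T2 h2 hne e he1 he2
    obtain ⟨e1, he1', rfl⟩ := Finset.mem_image.mp (Finset.mem_coe.mp h1)
    obtain ⟨e2, he2', rfl⟩ := Finset.mem_image.mp (Finset.mem_coe.mp h2)
    rw [hTf e1 (SimpleGraph.mem_edgeFinset.mp he1')] at he1
    rw [hTf e2 (SimpleGraph.mem_edgeFinset.mp he2')] at he2
    rw [List.mem_singleton] at he1 he2
    exact hne (congrArg Tf (he1.symm.trans he2))
  · intro e he
    have he' : e ∈ G.edgeFinset := SimpleGraph.mem_edgeFinset.mpr he
    exact ⟨Tf e, Finset.mem_image_of_mem _ he', by rw [hTf e he]; simp⟩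
  · intro T hT
    obtain ⟨e, he', rfl⟩ := Finset.mem_image.mp hT
    rw [hTf e (SimpleGraph.mem_edgeFinset.mp he')]
    simp; omega

end MinTrailDec

/-- For any graph `G` (and any bound `L ≥ 1`), there is a minimum `L`-trail
decomposition of `G` obtained by subdividing the trails of some minimum (unbounded) trail
decomposition of `G`: each bounded trail is a contiguous segment of a trail of the unbounded
decomposition. -/
theorem exists_min_bounded_decomposition_subdividing {V : Type*} [Fintype V]
    (G : SimpleGraph V) (L : ℕ) (hL : 0 < L) :
    ∃ DL D : Finset (GraphTrail G),
      (IsTrailDecomposition G DL ∧ (∀ T ∈ DL, T.edges.length ≤ L) ∧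
        ∀ D'' : Finset (GraphTrail G), IsTrailDecomposition G D'' →
          (∀ T ∈ D'', T.edges.length ≤ L) → DL.card ≤ D''.card) ∧
      IsMinTrailDecomposition G D ∧
      ∀ T' ∈ DL, ∃ T ∈ D, T'.edges <:+: T.edges := by
  classical
  obtain ⟨C0, hC0dec, hC0b⟩ := MinTrailDec.exists_bounded_dec (G := G) L hL
  have hex : ∃ n : ℕ, ∃ C : Finset (GraphTrail G), IsTrailDecomposition G C ∧
      (∀ T ∈ C, T.edges.length ≤ L) ∧ C.card = n := ⟨C0.card, C0, hC0dec, hC0b, rfl⟩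
  set k := Nat.find hex with hk
  obtain ⟨DL0, hDL0dec, hDL0b, hDL0card⟩ := Nat.find_spec hex
  have hkmin : ∀ D'' : Finset (GraphTrail G), IsTrailDecomposition G D'' →
      (∀ T ∈ D'', T.edges.length ≤ L) → k ≤ D''.card :=
    fun D'' h1 h2 => Nat.find_min' hex ⟨D'', h1, h2, rfl⟩
  have hf0 : MinTrailDec.fcost L DL0 ≤ k := by
    rw [hk, ← hDL0card]
    unfold MinTrailDec.fcost
    calc ∑ T ∈ DL0, MinTrailDec.cost L T ≤ ∑ _T ∈ DL0, 1 := by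
          apply Finset.sum_le_sum
          intro T hT
          unfold MinTrailDec.cost
          exact Nat.lt_succ_iff.mp ((Nat.div_lt_iff_lt_mul hL).mpr (by have := hDL0b T hT; omega))
      _ = DL0.card := by simp
  obtain ⟨Ds, hDsdec, hDsstuck, hDsf⟩ := MinTrailDec.to_stuck hL DL0.card DL0 le_rfl hDL0dec
  have hDsf' : MinTrailDec.fcost L Ds ≤ k := le_trans hDsf hf0
  have hDsmin : IsMinTrailDecomposition G Ds :=
    ⟨hDsdec, fun D'' h'' => MinTrailDec.stuck_min hDsdec hDsstuck h''⟩
  set DL := Ds.biUnion (fun T => (MinTrailDec.cut L T.walk T.isTrail).toFinset) with hDLdef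
  have hlenpos : ∀ T ∈ Ds, 0 < T.walk.length := by
    intro T hT
    have hne := hDsstuck.1 T hT
    have hlen : T.edges.length = T.walk.length := T.walk.length_edges
    have hne' : T.edges.length ≠ 0 := fun h0 => hne (List.length_eq_zero_iff.mp h0)
    omega
  have hflat : ∀ T ∈ Ds,
      ((MinTrailDec.cut L T.walk T.isTrail).map GraphTrail.edges).flatten = T.edges :=
    fun T _ => MinTrailDec.cut_flatten L T.walk.length T.walk T.isTrail le_rfl
  have hmemsub : ∀ T ∈ Ds, ∀ P ∈ MinTrailDec.cut L T.walk T.isTrail,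
      ∀ e ∈ P.edges, e ∈ T.edges := by
    intro T hT P hP e he
    rw [← hflat T hT]
    exact List.mem_flatten.mpr ⟨P.edges, List.mem_map_of_mem hP, he⟩
  have hDLdec : IsTrailDecomposition G DL := by
    constructor
    · intro P1 h1 P2 h2 hne e he1 he2
      obtain ⟨T1, hT1, hP1⟩ := Finset.mem_biUnion.mp (Finset.mem_coe.mp h1)
      obtain ⟨T2, hT2, hP2⟩ := Finset.mem_biUnion.mp (Finset.mem_coe.mp h2)
      rw [List.mem_toFinset] at hP1 hP2
      rcases eq_or_ne T1 T2 with rfl | hT12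
      · have hnd : ((MinTrailDec.cut L T1.walk T1.isTrail).map GraphTrail.edges).flatten.Nodup := by
          rw [hflat T1 hT1]; exact T1.isTrail.edges_nodup
        exact MinTrailDec.flatten_disjoint _ _ hnd P1 hP1 P2 hP2 hne e he1 he2
      · exact hDsdec.1 (Finset.mem_coe.mpr hT1) (Finset.mem_coe.mpr hT2) hT12 e
          (hmemsub T1 hT1 P1 hP1 e he1) (hmemsub T2 hT2 P2 hP2 e he2)
    · intro e he
      obtain ⟨T, hT, heT⟩ := hDsdec.2 e he
      have hme : e ∈ ((MinTrailDec.cut L T.walk T.isTrail).map GraphTrail.edges).flatten := by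
        rw [hflat T hT]; exact heT
      obtain ⟨l, hl, hel⟩ := List.mem_flatten.mp hme
      obtain ⟨P, hP, rfl⟩ := List.mem_map.mp hl
      exact ⟨P, Finset.mem_biUnion.mpr ⟨T, hT, List.mem_toFinset.mpr hP⟩, hel⟩
  have hDLb : ∀ P ∈ DL, P.edges.length ≤ L := by
    intro P hP
    obtain ⟨T, hT, hP'⟩ := Finset.mem_biUnion.mp hP
    exact (MinTrailDec.cut_piece_le L hL T.walk.length T.walk T.isTrail le_rfl P
      (List.mem_toFinset.mp hP')).1
  have hDLcard : DL.card ≤ k := by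
    calc DL.card ≤ ∑ T ∈ Ds, (MinTrailDec.cut L T.walk T.isTrail).toFinset.card :=
          Finset.card_biUnion_le
      _ ≤ ∑ T ∈ Ds, MinTrailDec.cost L T := by
          apply Finset.sum_le_sum
          intro T hT
          calc (MinTrailDec.cut L T.walk T.isTrail).toFinset.card
              ≤ (MinTrailDec.cut L T.walk T.isTrail).length := (MinTrailDec.cut L T.walk T.isTrail).toFinset_card_le
            _ ≤ (T.walk.length + L - 1) / L :=
                MinTrailDec.cut_count L hL T.walk.length T.walk T.isTrail le_rfl (hlenpos T hT)
            _ = MinTrailDec.cost L T := by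
                unfold MinTrailDec.cost
                rw [MinTrailDec.tedges, T.walk.length_edges]
      _ ≤ k := hDsf'
  refine ⟨DL, Ds, ⟨hDLdec, hDLb, fun D'' h1 h2 => le_trans hDLcard (hkmin D'' h1 h2)⟩,
    hDsmin, ?_⟩
  intro P hP
  obtain ⟨T, hT, hP'⟩ := Finset.mem_biUnion.mp hP
  refine ⟨T, hT, ?_⟩
  have hmm : P.edges ∈ (MinTrailDec.cut L T.walk T.isTrail).map GraphTrail.edges :=
    List.mem_map_of_mem (List.mem_toFinset.mp hP')
  have h2 := List.infix_of_mem_flatten hmm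
  rwa [hflat T hT] at h2
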